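/- Let m ≥ 3. Then for all α ∈ ℤ^{2^m}, all a,b ∈ {1,…,m} and all r,s ∈ {1,2}: u_{Σ_{ar}}(α Σ_{ar}) · u_{Σ_{ar}}(α) = 1, and u_{Σ_{ar}}(α Σ_{bs}) · u_{Σ_{bs}}(α) = u_{Σ_{bs}}(α Σ_{ar}) · u_{Σ_{ar}}(α). (These identities are exactly what makes the lifted automorphisms ẑ, Σ̂_{ar} of the twisted group algebra of BW(m) satisfy the defining relations of the extraspecial group E(m) = 2_+^{2m+1}, so that the lifted group Ê(m) is isomorphic to E(m).) -/

import Mathlib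

open Matrix

/-- `bwBit i a` is the `a`-th binary digit of `i`. -/
def bwBit (i a : ℕ) : ℕ := i / 2 ^ a % 2

/-- `bwPar m i` is the number of zero digits in the length-`m` binary expansion of `i`, mod 2. -/
def bwPar (m i : ℕ) : ℕ := ((Finset.range m).filter fun a => bwBit i a = 0).card % 2

/-- The exponent of `√2` in the `(i,j)` entry of the Gram matrix of `BW(m)`. -/
def bwExp (m i j : ℕ) : ℤ :=
  (bwPar m i : ℤ) + (bwPar m j : ℤ) - 2 * (((m + 1) / 2 : ℕ) : ℤ) +
    ∑ l ∈ Finset.range m,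
      (2 * (bwBit i l : ℤ) * (bwBit j l : ℤ) - (bwBit i l : ℤ) - (bwBit j l : ℤ) + 2)

/-- The Gram matrix of the Barnes-Wall lattice `BW(m)`:
`G i j = (w_i, w_j) = √2 ^ (p i + p j - 2⌈m/2⌉ + ∑ (2 i[l] j[l] - i[l] - j[l] + 2))`. -/
noncomputable def bwGram (m : ℕ) : Matrix (Fin (2 ^ m)) (Fin (2 ^ m)) ℝ :=
  Matrix.of fun i j => Real.sqrt 2 ^ bwExp m (i : ℕ) (j : ℕ)

/-- The matrix of the lattice automorphism `Σ_{ar}` of `BW(m)` in the basis `w_i`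
(acting on row vectors from the right); `r = 1` gives `Σ_{a1}`, any other `r` gives `Σ_{a2}`. -/
def bwSigma (m a r : ℕ) : Matrix (Fin (2 ^ m)) (Fin (2 ^ m)) ℤ :=
  Matrix.of fun i j =>
    if r = 1 then
      if bwBit (i : ℕ) (m - a) = 0 then
        (if j = i then -1 else 0) +
          (if (j : ℕ) = (i : ℕ) + 2 ^ (m - a) then 2 ^ bwPar m (i : ℕ) else 0)
      else if j = i then 1 else 0
    else
      if bwBit (i : ℕ) (m - a) = 1 then
        (if j = i then -1 else 0) +
          (if (j : ℕ) + 2 ^ (m - a) = (i : ℕ) then 2 ^ bwPar m (i : ℕ) else 0)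
      else if j = i then 1 else 0

/-- `A_{ar} = Σ_{ar} - I`. -/
def bwA (m a r : ℕ) : Matrix (Fin (2 ^ m)) (Fin (2 ^ m)) ℤ := bwSigma m a r - 1

/-- The half-Gram matrix `H` of `BW(m)`: `H i j = G i j` for `i > j`, `G i i / 2` on the
diagonal, and `0` above the diagonal. -/
noncomputable def bwH (m : ℕ) : Matrix (Fin (2 ^ m)) (Fin (2 ^ m)) ℝ :=
  Matrix.of fun i j =>
    if j < i then Real.sqrt 2 ^ bwExp m (i : ℕ) (j : ℕ)
    else if i = j then Real.sqrt 2 ^ (bwExp m (i : ℕ) (i : ℕ) - 2)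
    else 0

/-- The matrix `H - Σ H Σᵀ` underlying the bilinear form `B_Σ`. -/
noncomputable def bwBMat (m : ℕ) (S : Matrix (Fin (2 ^ m)) (Fin (2 ^ m)) ℤ) :
    Matrix (Fin (2 ^ m)) (Fin (2 ^ m)) ℝ :=
  bwH m - S.map (Int.cast : ℤ → ℝ) * bwH m * (S.map (Int.cast : ℤ → ℝ))ᵀ

/-- The bilinear form `B_Σ(α, β) = ∑_{i > j} α_i β_j (H - Σ H Σᵀ)_{ij}`. -/
noncomputable def bwBQuad (m : ℕ) (S : Matrix (Fin (2 ^ m)) (Fin (2 ^ m)) ℤ)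
    (α β : Fin (2 ^ m) → ℤ) : ℝ :=
  ∑ i, ∑ j, if j < i then (α i : ℝ) * (β j : ℝ) * bwBMat m S i j else 0

/-- `u_Σ(α) = (-1)^{B_Σ(α,α)}`, rendered as `cos (π B_Σ(α,α))`, which agrees with
`(-1)^k` whenever `B_Σ(α,α)` is the integer `k`. -/
noncomputable def bwU (m : ℕ) (S : Matrix (Fin (2 ^ m)) (Fin (2 ^ m)) ℤ)
    (α : Fin (2 ^ m) → ℤ) : ℝ :=
  Real.cos (Real.pi * bwBQuad m S α α)

/-!
Over `ℤ`, `u_Σ(α) = (-1) ^ (α ⬝ᵥ L_Σ *ᵥ α)`, where `L_Σ` is the strictly lower triangular part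
of the integer matrix `H - Σ H Σᵀ`. Call an index `i` odd when `p(i) = 1`. Two parity facts
drive everything: entries of `H` between two odd indices are even (this needs `m ≥ 2`), and
every odd entry of `Σ_{ar} - 1` lies in an even row and an odd column. Expanding with
`Σ = 1 + A`, they make `H - Σ H Σᵀ`, hence `L_Σ`, even in every odd row and odd column, and then
`Σ' L_Σ Σ'ᵀ ≡ L_Σ (mod 2)` for every generator `Σ'`. So `u_Σ(α Σ') = u_Σ(α)`, and both relations
follow from `u_Σ(α) ^ 2 = 1`.
-/

namespace Matrix

variable {l m n R : Type*}

def strictLowerPart [LinearOrder n] [Zero R] (M : Matrix n n R) : Matrix n n R :=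
  of fun i j => if j < i then M i j else 0

variable [Fintype m]

lemma dvd_mul_apply [CommSemiring R] {d : R} {A : Matrix l m R} {B : Matrix m n R} {x : l} {y : n}
    (h : ∀ k, d ∣ A x k ∨ d ∣ B k y) : d ∣ (A * B) x y :=
  Finset.dvd_sum fun k _ => (h k).elim (·.mul_right _) (·.mul_left _)

lemma dvd_dotProduct_mulVec [Fintype n] [CommSemiring R] {d : R} {K : Matrix m n R}
    (h : ∀ i j, d ∣ K i j) (v : m → R) (w : n → R) : d ∣ v ⬝ᵥ K *ᵥ w :=
  Finset.dvd_sum fun i _ => (Finset.dvd_sum fun j _ => (h i j).mul_right _).mul_left _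

lemma vecMul_dotProduct_mulVec_vecMul [Fintype n] [CommSemiring R] (S : Matrix m n R)
    (K : Matrix n n R) (v : m → R) :
    (v ᵥ* S) ⬝ᵥ K *ᵥ (v ᵥ* S) = v ⬝ᵥ (S * K * Sᵀ) *ᵥ v := by
  rw [← mulVec_mulVec, ← mulVec_mulVec, mulVec_transpose, dotProduct_mulVec v S]

lemma dvd_vecMul_dotProduct_mulVec_vecMul_sub [CommRing R] {d : R} {S L : Matrix m m R}
    (h : ∀ i j, d ∣ (S * L * Sᵀ - L) i j) (v : m → R) :
    d ∣ (v ᵥ* S) ⬝ᵥ L *ᵥ (v ᵥ* S) - v ⬝ᵥ L *ᵥ v := by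
  rw [vecMul_dotProduct_mulVec_vecMul, ← dotProduct_sub, ← sub_mulVec]
  exact dvd_dotProduct_mulVec h v v

variable [DecidableEq m] [CommRing R] {d : R} {P : m → Prop}

lemma dvd_sub_conj_apply {S H : Matrix m m R}
    (hS : ∀ x k, ¬ d ∣ (S - 1) x k → P k ∧ ¬ P x) (hH : ∀ u v, P u → P v → d ∣ H u v)
    {u v : m} (huv : P u ∨ P v) : d ∣ (H - S * H * Sᵀ) u v := by
  set A := S - 1
  have hAH : ∀ u v, P u ∨ P v → d ∣ (A * H) u v := fun u v huv =>
    dvd_mul_apply fun k => (em _).imp_right fun hk =>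
      hH k v (hS u k hk).1 (huv.resolve_left (hS u k hk).2)
  have hHA : d ∣ (H * Aᵀ) u v :=
    dvd_mul_apply fun k => (em (d ∣ A v k)).symm.imp_left fun hk =>
      hH u k (huv.resolve_right (hS v k hk).2) (hS v k hk).1
  have hAHA : d ∣ (A * H * Aᵀ) u v :=
    dvd_mul_apply fun k => (em (d ∣ A v k)).symm.imp_left fun hk => hAH u k (.inr (hS v k hk).1)
  have hdecomp : H - S * H * Sᵀ = -(A * H * Aᵀ + A * H + H * Aᵀ) := by
    simp only [A, transpose_sub, transpose_one]
    noncomm_ring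
  rw [hdecomp, neg_apply, dvd_neg]
  exact dvd_add (dvd_add hAHA (hAH u v huv)) hHA

lemma dvd_conj_sub_apply {S L : Matrix m m R} (hS : ∀ x k, ¬ d ∣ (S - 1) x k → P k)
    (hL : ∀ u v, P u ∨ P v → d ∣ L u v) (x y : m) : d ∣ (S * L * Sᵀ - L) x y := by
  set A := S - 1
  have hAL : ∀ u v, d ∣ (A * L) u v := fun u v =>
    dvd_mul_apply fun k => (em _).imp_right fun hk => hL k v (.inl (hS u k hk))
  have hLA : d ∣ (L * Aᵀ) x y :=
    dvd_mul_apply fun k => (em (d ∣ A y k)).symm.imp_left fun hk => hL x k (.inr (hS y k hk))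
  have hdecomp : S * L * Sᵀ - L = A * L * Aᵀ + A * L + L * Aᵀ := by
    simp only [A, transpose_sub, transpose_one]
    noncomm_ring
  rw [hdecomp]
  exact dvd_add (dvd_add (dvd_mul_apply fun k => .inl (hAL x k)) (hAL x y)) hLA

end Matrix

lemma neg_one_zpow_eq_of_two_dvd_sub {R : Type*} [DivisionRing R] {p q : ℤ} (h : 2 ∣ p - q) :
    (-1 : R) ^ p = (-1) ^ q := by
  rw [← sub_add_cancel p q, zpow_add₀ (neg_ne_zero.mpr one_ne_zero),
    (even_iff_two_dvd.mpr h).neg_one_zpow, one_mul]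

open Finset

lemma bwBit_le_one (x t : ℕ) : bwBit x t ≤ 1 :=
  Nat.le_of_lt_succ (Nat.mod_lt _ two_pos)

lemma bwBit_add_two_pow_self (x t : ℕ) : bwBit (x + 2 ^ t) t = 1 - bwBit x t := by
  unfold bwBit
  rw [Nat.add_div_right _ (by positivity)]
  omega

lemma bwBit_add_two_pow_of_ne {x t l : ℕ} (hx : bwBit x t = 0) (hl : l ≠ t) :
    bwBit (x + 2 ^ t) l = bwBit x l := by
  unfold bwBit at *
  rcases Nat.lt_or_gt_of_ne hl with hlt | hgt
  · obtain ⟨c, rfl⟩ : ∃ c, t = l + 1 + c := ⟨t - l - 1, by omega⟩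
    rw [pow_add, pow_succ, mul_assoc, Nat.add_mul_div_left _ _ (by positivity),
      Nat.add_mul_mod_self_left]
  · obtain ⟨c, rfl⟩ : ∃ c, l = t + 1 + c := ⟨l - t - 1, by omega⟩
    simp only [pow_add, pow_one, ← Nat.div_div_eq_div_mul]
    rw [Nat.add_div_right _ (by positivity), show (x / 2 ^ t + 1) / 2 = x / 2 ^ t / 2 by omega]

lemma bwPar_add_two_pow {m x t : ℕ} (ht : t < m) (hx : bwBit x t = 0) :
    bwPar m (x + 2 ^ t) + bwPar m x = 1 := by
  have hzeros : (range m).filter (fun l => bwBit (x + 2 ^ t) l = 0) =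
      ((range m).filter fun l => bwBit x l = 0).erase t := by
    ext l
    by_cases hl : l = t
    · simp [hl, bwBit_add_two_pow_self, hx]
    · simp [hl, bwBit_add_two_pow_of_ne hx hl]
  have ht_mem : t ∈ (range m).filter fun l => bwBit x l = 0 := by simp [ht, hx]
  have hpos := card_pos.mpr ⟨t, ht_mem⟩
  unfold bwPar
  rw [hzeros, card_erase_of_mem ht_mem]
  omega

lemma card_filter_bwBit_eq_zero_add_sum (m x : ℕ) :
    ((range m).filter fun l => bwBit x l = 0).card + ∑ l ∈ range m, bwBit x l = m := by
  rw [card_filter, ← sum_add_distrib]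
  calc ∑ l ∈ range m, ((if bwBit x l = 0 then 1 else 0) + bwBit x l)
      = ∑ _l ∈ range m, 1 := sum_congr rfl fun l _ => by
        have := bwBit_le_one x l
        split_ifs <;> omega
    _ = m := by simp

lemma even_bwExp (m x y : ℕ) : Even (bwExp m x y) := by
  have hx : (((range m).filter fun l => bwBit x l = 0).card : ℤ) +
      ∑ l ∈ range m, (bwBit x l : ℤ) = m := mod_cast card_filter_bwBit_eq_zero_add_sum m x
  have hy : (((range m).filter fun l => bwBit y l = 0).card : ℤ) +
      ∑ l ∈ range m, (bwBit y l : ℤ) = m := mod_cast card_filter_bwBit_eq_zero_add_sum m y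
  have hsum : ∑ l ∈ range m, (2 * (bwBit x l : ℤ) * bwBit y l - bwBit x l - bwBit y l + 2) =
      2 * ∑ l ∈ range m, (bwBit x l : ℤ) * bwBit y l - ∑ l ∈ range m, (bwBit x l : ℤ) -
        ∑ l ∈ range m, (bwBit y l : ℤ) + 2 * m := by
    simp only [sum_add_distrib, sum_sub_distrib, mul_sum, sum_const, card_range, nsmul_eq_mul]
    ring_nf
  unfold bwExp bwPar
  rw [hsum, Int.even_iff]
  push_cast
  omega

lemma le_bwExp (m x y : ℕ) :
    (bwPar m x : ℤ) + bwPar m y + m - 2 * (((m + 1) / 2 : ℕ) : ℤ) ≤ bwExp m x y := by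
  have hsum : (m : ℤ) ≤
      ∑ l ∈ range m, (2 * (bwBit x l : ℤ) * bwBit y l - bwBit x l - bwBit y l + 2) := by
    calc (m : ℤ) = ∑ _l ∈ range m, 1 := by simp
      _ ≤ _ := sum_le_sum fun l _ => by
        have := bwBit_le_one x l
        have := bwBit_le_one y l
        interval_cases bwBit x l <;> interval_cases bwBit y l <;> norm_num
  unfold bwExp
  linarith

lemma bwExp_self (m x : ℕ) :
    bwExp m x x = 2 * (bwPar m x : ℤ) + 2 * m - 2 * (((m + 1) / 2 : ℕ) : ℤ) := by
  have hsum : ∑ l ∈ range m, (2 * (bwBit x l : ℤ) * bwBit x l - bwBit x l - bwBit x l + 2) =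
      2 * m := by
    calc _ = ∑ _l ∈ range m, (2 : ℤ) := sum_congr rfl fun l _ => by
          have := bwBit_le_one x l
          interval_cases bwBit x l <;> norm_num
      _ = 2 * m := by simp [mul_comm]
  unfold bwExp
  rw [hsum]
  ring

lemma bwExp_nonneg (m x y : ℕ) : 0 ≤ bwExp m x y := by
  have hge := le_bwExp m x y
  have heven := Int.even_iff.mp (even_bwExp m x y)
  have hceil : 2 * ((m + 1) / 2) ≤ m + 1 := Nat.mul_div_le _ _
  omega

lemma sqrt_two_zpow_of_even {e : ℤ} (he : Even e) (h0 : 0 ≤ e) :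
    √2 ^ e = ((2 ^ (e.toNat / 2) : ℤ) : ℝ) := by
  have he' : e = ((2 * (e.toNat / 2) : ℕ) : ℤ) := by
    have := Int.even_iff.mp he
    omega
  nth_rw 1 [he']
  rw [zpow_natCast, pow_mul, Real.sq_sqrt zero_le_two]
  push_cast
  rfl

def bwHZ (m : ℕ) : Matrix (Fin (2 ^ m)) (Fin (2 ^ m)) ℤ :=
  Matrix.of fun i j =>
    if j < i then 2 ^ ((bwExp m i j).toNat / 2)
    else if i = j then 2 ^ ((bwExp m i i - 2).toNat / 2)
    else 0

lemma bwH_eq_map_bwHZ {m : ℕ} (hm : 2 ≤ m) : bwH m = (bwHZ m).map (Int.cast : ℤ → ℝ) := by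
  ext i j
  simp only [bwH, bwHZ, map_apply, of_apply]
  split_ifs
  · exact sqrt_two_zpow_of_even (even_bwExp m i j) (bwExp_nonneg m i j)
  · have hself := bwExp_self m i
    have hceil : 2 * ((m + 1) / 2) ≤ m + 1 := Nat.mul_div_le _ _
    exact sqrt_two_zpow_of_even ⟨bwPar m i + m - ((m + 1) / 2 : ℕ) - 1, by omega⟩ (by omega)
  · simp

lemma two_dvd_bwHZ {m : ℕ} (hm : 2 ≤ m) {x y : Fin (2 ^ m)} (hx : bwPar m x = 1)
    (hy : bwPar m y = 1) : 2 ∣ bwHZ m x y := by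
  have hceil : 2 * ((m + 1) / 2) ≤ m + 1 := Nat.mul_div_le _ _
  simp only [bwHZ, of_apply]
  split_ifs with hyx hxy
  · have hge := le_bwExp m x y
    have heven := Int.even_iff.mp (even_bwExp m x y)
    rw [hx, hy] at hge
    exact dvd_pow_self 2 (by omega)
  · have hself := bwExp_self m x
    rw [hx] at hself
    exact dvd_pow_self 2 (by omega)
  · exact dvd_zero 2

lemma bwPar_of_not_two_dvd_bwSigma_sub_one {m a r : ℕ} {x k : Fin (2 ^ m)}
    (h : ¬ 2 ∣ (bwSigma m a r - 1) x k) : bwPar m k = 1 ∧ bwPar m x ≠ 1 := by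
  have hpow_odd : ∀ p : ℕ, ¬ 2 ∣ (2 : ℤ) ^ p → p = 0 := fun p hp =>
    by_contra fun hp0 => hp (dvd_pow_self 2 hp0)
  have hlt : ∀ y : Fin (2 ^ m), 2 ^ (m - a) ≤ (y : ℕ) → m - a < m := fun y hy =>
    (Nat.pow_lt_pow_iff_right one_lt_two).mp (hy.trans_lt y.isLt)
  by_cases hkx : k = x
  · subst hkx
    refine absurd ?_ h
    simp only [Matrix.sub_apply, one_apply_eq, bwSigma, of_apply, if_true]
    have hpos : 0 < 2 ^ (m - a) := by positivity
    split_ifs <;> omega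
  · simp only [Matrix.sub_apply, one_apply_ne (Ne.symm hkx), bwSigma, of_apply, if_neg hkx,
      zero_add, sub_zero] at h
    split_ifs at h with hr hbit hk hbit' hk' <;> try exact absurd (dvd_zero 2) h
    · have hx := hpow_odd _ h
      refine ⟨?_, by omega⟩
      have hpar := bwPar_add_two_pow (hlt k (by omega)) hbit
      rw [← hk] at hpar
      omega
    · have hx := hpow_odd _ h
      refine ⟨?_, by omega⟩
      have hbitk : bwBit k (m - a) = 0 := by
        have hflip := bwBit_add_two_pow_self k (m - a)
        have := bwBit_le_one k (m - a)
        rw [hk'] at hflip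
        omega
      have hpar := bwPar_add_two_pow (hlt x (by omega)) hbitk
      rw [hk'] at hpar
      omega

def bwBMatZ (m : ℕ) (S : Matrix (Fin (2 ^ m)) (Fin (2 ^ m)) ℤ) :
    Matrix (Fin (2 ^ m)) (Fin (2 ^ m)) ℤ :=
  bwHZ m - S * bwHZ m * Sᵀ

lemma bwBMat_eq_map_bwBMatZ {m : ℕ} (hm : 2 ≤ m) (S : Matrix (Fin (2 ^ m)) (Fin (2 ^ m)) ℤ) :
    bwBMat m S = (bwBMatZ m S).map (Int.cast : ℤ → ℝ) := by
  rw [bwBMat, bwH_eq_map_bwHZ hm, bwBMatZ]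
  ext i j
  simp [Matrix.mul_apply]

lemma bwBQuad_self_eq {m : ℕ} (hm : 2 ≤ m) (S : Matrix (Fin (2 ^ m)) (Fin (2 ^ m)) ℤ)
    (α : Fin (2 ^ m) → ℤ) :
    bwBQuad m S α α = ((α ⬝ᵥ (bwBMatZ m S).strictLowerPart *ᵥ α : ℤ) : ℝ) := by
  simp only [bwBQuad, bwBMat_eq_map_bwBMatZ hm, dotProduct, mulVec, strictLowerPart, of_apply,
    mul_sum, map_apply]
  push_cast
  refine sum_congr rfl fun i _ => sum_congr rfl fun j _ => ?_
  split_ifs <;> ring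

lemma bwU_eq_neg_one_zpow {m : ℕ} (hm : 2 ≤ m) (S : Matrix (Fin (2 ^ m)) (Fin (2 ^ m)) ℤ)
    (α : Fin (2 ^ m) → ℤ) :
    bwU m S α = (-1) ^ (α ⬝ᵥ (bwBMatZ m S).strictLowerPart *ᵥ α) := by
  rw [bwU, bwBQuad_self_eq hm, mul_comm, Real.cos_int_mul_pi]

lemma bwU_mul_self {m : ℕ} (hm : 2 ≤ m) (S : Matrix (Fin (2 ^ m)) (Fin (2 ^ m)) ℤ)
    (α : Fin (2 ^ m) → ℤ) : bwU m S α * bwU m S α = 1 := by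
  rw [bwU_eq_neg_one_zpow hm, ← mul_zpow]
  norm_num

lemma two_dvd_strictLowerPart_bwBMatZ {m : ℕ} (hm : 2 ≤ m) (a r : ℕ) {u v : Fin (2 ^ m)}
    (huv : bwPar m u = 1 ∨ bwPar m v = 1) :
    2 ∣ (bwBMatZ m (bwSigma m a r)).strictLowerPart u v := by
  simp only [strictLowerPart, of_apply]
  split_ifs
  · exact dvd_sub_conj_apply (fun _ _ => bwPar_of_not_two_dvd_bwSigma_sub_one)
      (fun _ _ => two_dvd_bwHZ hm) huv
  · exact dvd_zero 2

lemma bwU_vecMul_bwSigma {m : ℕ} (hm : 2 ≤ m) (a r b s : ℕ) (α : Fin (2 ^ m) → ℤ) :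
    bwU m (bwSigma m a r) (α ᵥ* bwSigma m b s) = bwU m (bwSigma m a r) α := by
  rw [bwU_eq_neg_one_zpow hm, bwU_eq_neg_one_zpow hm]
  refine neg_one_zpow_eq_of_two_dvd_sub (dvd_vecMul_dotProduct_mulVec_vecMul_sub ?_ α)
  exact dvd_conj_sub_apply (fun _ _ h => (bwPar_of_not_two_dvd_bwSigma_sub_one h).1)
    (fun _ _ => two_dvd_strictLowerPart_bwBMatZ hm a r)

theorem bwU_extraspecial_relations_general (m : ℕ) (hm : 3 ≤ m) (a b r s : ℕ)
    (α : Fin (2 ^ m) → ℤ) :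
    bwU m (bwSigma m a r) (Matrix.vecMul α (bwSigma m a r)) * bwU m (bwSigma m a r) α = 1 ∧
    bwU m (bwSigma m a r) (Matrix.vecMul α (bwSigma m b s)) * bwU m (bwSigma m b s) α =
      bwU m (bwSigma m b s) (Matrix.vecMul α (bwSigma m a r)) * bwU m (bwSigma m a r) α := by
  have hm2 : 2 ≤ m := by omega
  refine ⟨?_, ?_⟩
  · rw [bwU_vecMul_bwSigma hm2]
    exact bwU_mul_self hm2 _ α
  · rw [bwU_vecMul_bwSigma hm2, bwU_vecMul_bwSigma hm2, mul_comm]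

/-- For `m ≥ 3`: `u_{Σ_{ar}}(α Σ_{ar}) u_{Σ_{ar}}(α) = 1` and
`u_{Σ_{ar}}(α Σ_{bs}) u_{Σ_{bs}}(α) = u_{Σ_{bs}}(α Σ_{ar}) u_{Σ_{ar}}(α)`.
These identities are exactly what makes the lifted automorphisms of the twisted group algebra
of `BW(m)` satisfy the relations of the extraspecial group `E(m) = 2_+^{2m+1}`. -/
theorem bwU_extraspecial_relations (m : ℕ) (hm : 3 ≤ m) (a b r s : ℕ)
    (ha : 1 ≤ a) (ha' : a ≤ m) (hb : 1 ≤ b) (hb' : b ≤ m)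
    (hr : r = 1 ∨ r = 2) (hs : s = 1 ∨ s = 2) (α : Fin (2 ^ m) → ℤ) :
    bwU m (bwSigma m a r) (Matrix.vecMul α (bwSigma m a r)) * bwU m (bwSigma m a r) α = 1 ∧
    bwU m (bwSigma m a r) (Matrix.vecMul α (bwSigma m b s)) * bwU m (bwSigma m b s) α =
      bwU m (bwSigma m b s) (Matrix.vecMul α (bwSigma m a r)) * bwU m (bwSigma m a r) α :=
  bwU_extraspecial_relations_general m hm a b r s α
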